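/- arXiv:2004.09937 — 3 statements merged into one kernel-verified Lean document; each statement's English description precedes it below -/
import Mathlib

section
/- Let n and r be positive integers with 3 dividing n, let G be a graph on a vertex set V with |V| = n, and let W be a set of r new vertices disjoint from V. Let J be the graph on V ∪ W whose edge set consists of the edges of G together with all pairs {v, w} with v ∈ V and w ∈ W (and no edges inside W). Then the edge set of G can be partitioned into r triangle-factors of V if and only if the edge set of J can be partitioned into copies of K₄ each having exactly 3 vertices in V and exactly 1 vertex in W. -/
open scoped Classical

noncomputable section

/-- The auxiliary graph `J` on `V ∪ W`: edges of `G` inside `V`, all edges between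
`V` and `W`, and no edges inside `W`. -/
def auxJ (n r : ℕ) (G : SimpleGraph (Fin n)) : SimpleGraph (Fin n ⊕ Fin r) where
  Adj x y :=
    (∃ a b, x = Sum.inl a ∧ y = Sum.inl b ∧ G.Adj a b) ∨
      (∃ a w, x = Sum.inl a ∧ y = Sum.inr w) ∨
      (∃ a w, x = Sum.inr w ∧ y = Sum.inl a)
  symm := by
    constructor
    rintro x y (⟨a, b, rfl, rfl, h⟩ | ⟨a, w, rfl, rfl⟩ | ⟨a, w, rfl, rfl⟩)
    · exact Or.inl ⟨b, a, rfl, rfl, h.symm⟩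
    · exact Or.inr (Or.inr ⟨a, w, rfl, rfl⟩)
    · exact Or.inr (Or.inl ⟨a, w, rfl, rfl⟩)
  loopless := by
    constructor
    rintro x (⟨a, b, rfl, hab, h⟩ | ⟨a, w, rfl, haw⟩ | ⟨a, w, rfl, hwa⟩)
    · cases hab; exact G.irrefl h
    · exact absurd haw (by simp)
    · exact absurd hwa (by simp)

/-- A triangle-factor: a `2`-regular graph in which every path of length two closes
into a triangle, i.e. a vertex-disjoint union of triangles covering all vertices. -/
def IsTriangleFactor {n : ℕ} (T : SimpleGraph (Fin n)) : Prop :=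
  (∀ v, {u : Fin n | T.Adj v u}.ncard = 2) ∧
    ∀ u v w, T.Adj u v → T.Adj v w → u ≠ w → T.Adj u w

/-- Data for a copy of `K₄` with three vertices `a,b,c ∈ V` and one vertex `w ∈ W`. -/
abbrev K4Data (n r : ℕ) := (Fin n × Fin n × Fin n) × Fin r

/-- The copy is genuine: `a,b,c` are distinct and pairwise adjacent in `G`
(the three spokes to `w` are automatically present in `J`). -/
def IsK4 {n r : ℕ} (G : SimpleGraph (Fin n)) (q : K4Data n r) : Prop :=
  q.1.1 ≠ q.1.2.1 ∧ q.1.1 ≠ q.1.2.2 ∧ q.1.2.1 ≠ q.1.2.2 ∧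
    G.Adj q.1.1 q.1.2.1 ∧ G.Adj q.1.1 q.1.2.2 ∧ G.Adj q.1.2.1 q.1.2.2

/-- The six edges of the copy of `K₄` determined by `q`. -/
def K4Edge {n r : ℕ} (q : K4Data n r) (e : Sym2 (Fin n ⊕ Fin r)) : Prop :=
  e = s(Sum.inl q.1.1, Sum.inl q.1.2.1) ∨ e = s(Sum.inl q.1.1, Sum.inl q.1.2.2) ∨
    e = s(Sum.inl q.1.2.1, Sum.inl q.1.2.2) ∨ e = s(Sum.inl q.1.1, Sum.inr q.2) ∨
    e = s(Sum.inl q.1.2.1, Sum.inr q.2) ∨ e = s(Sum.inl q.1.2.2, Sum.inr q.2)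


variable {n r : ℕ} {G : SimpleGraph (Fin n)}

lemma memJ_inl {a b : Fin n} : s(Sum.inl a, Sum.inl b) ∈ (auxJ n r G).edgeSet ↔ G.Adj a b := by
  simp [auxJ, SimpleGraph.mem_edgeSet]

lemma memJ_spoke {a : Fin n} {w : Fin r} : s(Sum.inl a, Sum.inr w) ∈ (auxJ n r G).edgeSet := by
  simp [auxJ, SimpleGraph.mem_edgeSet]

lemma K4Edge_spoke_iff {q : K4Data n r} {a : Fin n} {w : Fin r} :
    K4Edge q s(Sum.inl a, Sum.inr w) ↔ w = q.2 ∧ (a = q.1.1 ∨ a = q.1.2.1 ∨ a = q.1.2.2) := by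
  simp [K4Edge, Sym2.eq_iff]; tauto

lemma K4Edge_inl_iff {q : K4Data n r} {a b : Fin n} :
    K4Edge q s(Sum.inl a, Sum.inl b) ↔
      (a = q.1.1 ∧ b = q.1.2.1) ∨ (a = q.1.2.1 ∧ b = q.1.1) ∨
      (a = q.1.1 ∧ b = q.1.2.2) ∨ (a = q.1.2.2 ∧ b = q.1.1) ∨
      (a = q.1.2.1 ∧ b = q.1.2.2) ∨ (a = q.1.2.2 ∧ b = q.1.2.1) := by
  simp [K4Edge, Sym2.eq_iff]; tauto
lemma sort3 {n : ℕ} {a b c : Fin n} (hab : a ≠ b) (hac : a ≠ c) (hbc : b ≠ c) :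
    ∃ x y z : Fin n, x < y ∧ y < z ∧ ({x, y, z} : Set (Fin n)) = {a, b, c} := by
  rcases hab.lt_or_gt with h1 | h1 <;> rcases hac.lt_or_gt with h2 | h2 <;>
    rcases hbc.lt_or_gt with h3 | h3
  · exact ⟨a, b, c, h1, h3, rfl⟩
  · exact ⟨a, c, b, h2, h3, by ext t; simp; tauto⟩
  · exact absurd (h2.trans (h1.trans h3)) (lt_irrefl c)
  · exact ⟨c, a, b, h2, h1, by ext t; simp; tauto⟩
  · exact ⟨b, a, c, h1, h2, by ext t; simp; tauto⟩
  · exact absurd ((h2.trans h3).trans h1) (lt_irrefl a)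
  · exact ⟨b, c, a, h3, h2, by ext t; simp; tauto⟩
  · exact ⟨c, b, a, h3, h1, by ext t; simp; tauto⟩

lemma sorted_eq {n : ℕ} {a b c a' b' c' : Fin n} (h1 : a < b) (h2 : b < c)
    (h1' : a' < b') (h2' : b' < c')
    (ha : a = a' ∨ a = b' ∨ a = c') (hb : b = a' ∨ b = b' ∨ b = c')
    (hc : c = a' ∨ c = b' ∨ c = c') : a = a' ∧ b = b' ∧ c = c' := by
  rcases ha with rfl | rfl | rfl <;> rcases hb with rfl | rfl | rfl <;>
    rcases hc with rfl | rfl | rfl <;>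
    first
      | exact ⟨rfl, rfl, rfl⟩
      | (exfalso; simp only [Fin.lt_def] at h1 h2 h1' h2'; omega)
section Helpers

variable {n r : ℕ} {G : SimpleGraph (Fin n)}

lemma nbhd_struct {T : SimpleGraph (Fin n)} (hT : IsTriangleFactor T) (a : Fin n) :
    ∃ b c, b ≠ c ∧ T.Adj a b ∧ T.Adj a c ∧ T.Adj b c ∧ {u | T.Adj a u} = {b, c} := by
  obtain ⟨b, c, hbc, hset⟩ := Set.ncard_eq_two.mp (hT.1 a)
  have hb : T.Adj a b := by
    have : b ∈ {u | T.Adj a u} := by rw [hset]; exact Or.inl rfl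
    exact this
  have hc : T.Adj a c := by
    have : c ∈ {u | T.Adj a u} := by rw [hset]; exact Or.inr rfl
    exact this
  exact ⟨b, c, hbc, hb, hc, hT.2 b a c hb.symm hc hbc, hset⟩

lemma third {T : SimpleGraph (Fin n)} (hT : IsTriangleFactor T) {a b : Fin n}
    (hab : T.Adj a b) : ∃ c, T.Adj a c ∧ T.Adj b c ∧ {u | T.Adj a u} = {b, c} := by
  obtain ⟨x, y, hxy, hax, hay, hxya, hset⟩ := nbhd_struct hT a
  have hb : b ∈ ({x, y} : Set (Fin n)) := hset ▸ hab
  simp only [Set.mem_insert_iff, Set.mem_singleton_iff] at hb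
  rcases hb with rfl | rfl
  · exact ⟨y, hay, hxya, hset⟩
  · exact ⟨x, hax, hxya.symm, by rw [hset, Set.pair_comm]⟩

lemma triple_mem {T : SimpleGraph (Fin n)} {a x y z b c : Fin n}
    (hxy : T.Adj x y) (hxz : T.Adj x z) (hyz : T.Adj y z)
    (ha : a = x ∨ a = y ∨ a = z) (hset : {u | T.Adj a u} = {b, c}) :
    (x = a ∨ x = b ∨ x = c) ∧ (y = a ∨ y = b ∨ y = c) ∧ (z = a ∨ z = b ∨ z = c) := by
  have key : ∀ t, T.Adj a t → t = b ∨ t = c := by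
    intro t ht
    have : t ∈ ({b, c} : Set (Fin n)) := hset ▸ ht
    simpa using this
  rcases ha with rfl | rfl | rfl
  · exact ⟨Or.inl rfl, Or.inr (key _ hxy), Or.inr (key _ hxz)⟩
  · exact ⟨Or.inr (key _ hxy.symm), Or.inl rfl, Or.inr (key _ hyz)⟩
  · exact ⟨Or.inr (key _ hxz.symm), Or.inr (key _ hyz.symm), Or.inl rfl⟩

lemma K4Edge_of_mem {q : K4Data n r} {a b : Fin n}
    (ha : a = q.1.1 ∨ a = q.1.2.1 ∨ a = q.1.2.2)
    (hb : b = q.1.1 ∨ b = q.1.2.1 ∨ b = q.1.2.2) (hab : a ≠ b) :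
    K4Edge q s(Sum.inl a, Sum.inl b) := by
  rw [K4Edge_inl_iff]
  rcases ha with ha | ha | ha <;> rcases hb with hb | hb | hb <;> subst ha hb <;> tauto

lemma adj_of_K4 {q : K4Data n r} {a b : Fin n} (hK4 : IsK4 G q)
    (hK : K4Edge q s(Sum.inl a, Sum.inl b)) : G.Adj a b := by
  rw [K4Edge_inl_iff] at hK
  obtain ⟨d1, d2, d3, e1, e2, e3⟩ := hK4
  rcases hK with ⟨rfl, rfl⟩ | ⟨rfl, rfl⟩ | ⟨rfl, rfl⟩ | ⟨rfl, rfl⟩ | ⟨rfl, rfl⟩ | ⟨rfl, rfl⟩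
  · exact e1
  · exact e1.symm
  · exact e2
  · exact e2.symm
  · exact e3
  · exact e3.symm

lemma mem_left_of_K4Edge {q : K4Data n r} {a b : Fin n}
    (hK : K4Edge q s(Sum.inl a, Sum.inl b)) :
    a = q.1.1 ∨ a = q.1.2.1 ∨ a = q.1.2.2 := by
  rw [K4Edge_inl_iff] at hK; tauto

end Helpers
lemma forward_dir {n r : ℕ} (G : SimpleGraph (Fin n)) (T : Fin r → SimpleGraph (Fin n))
    (hT : ∀ i, IsTriangleFactor (T i))
    (hdisj : Pairwise fun i j => Disjoint (T i).edgeSet (T j).edgeSet)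
    (hunion : (⋃ i, (T i).edgeSet) = G.edgeSet) :
    ∃ Q : Set (K4Data n r), (∀ q ∈ Q, IsK4 G q) ∧
      ∀ e, e ∈ (auxJ n r G).edgeSet ↔ ∃! q, q ∈ Q ∧ K4Edge q e := by
  classical
  set Q : Set (K4Data n r) := {q | q.1.1 < q.1.2.1 ∧ q.1.2.1 < q.1.2.2 ∧
    (T q.2).Adj q.1.1 q.1.2.1 ∧ (T q.2).Adj q.1.1 q.1.2.2 ∧
    (T q.2).Adj q.1.2.1 q.1.2.2} with hQdef
  have hsub : ∀ (i : Fin r) {a b : Fin n}, (T i).Adj a b → G.Adj a b := by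
    intro i a b h
    have : s(a, b) ∈ G.edgeSet := by
      rw [← hunion]; exact Set.mem_iUnion.2 ⟨i, h⟩
    exact this
  have hTadj : ∀ q ∈ Q, ∀ {a b : Fin n},
      K4Edge q s(Sum.inl a, Sum.inl b) → (T q.2).Adj a b := by
    rintro q ⟨-, -, e1, e2, e3⟩ a b hK
    rw [K4Edge_inl_iff] at hK
    rcases hK with ⟨rfl, rfl⟩ | ⟨rfl, rfl⟩ | ⟨rfl, rfl⟩ | ⟨rfl, rfl⟩ | ⟨rfl, rfl⟩ | ⟨rfl, rfl⟩
    · exact e1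
    · exact e1.symm
    · exact e2
    · exact e2.symm
    · exact e3
    · exact e3.symm
  have key_eq : ∀ (q' : K4Data n r) (x y z a b c : Fin n) (i : Fin r),
      q' ∈ Q → q'.2 = i →
      (q'.1.1 = a ∨ q'.1.1 = b ∨ q'.1.1 = c) →
      (q'.1.2.1 = a ∨ q'.1.2.1 = b ∨ q'.1.2.1 = c) →
      (q'.1.2.2 = a ∨ q'.1.2.2 = b ∨ q'.1.2.2 = c) →
      x < y → y < z → ({x, y, z} : Set (Fin n)) = {a, b, c} →
      q' = ((x, y, z), i) := by
    rintro ⟨⟨x', y', z'⟩, i'⟩ x y z a b c i hq' h2 m1 m2 m3 hxy hyz hset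
    have conv : ∀ t : Fin n, (t = a ∨ t = b ∨ t = c) → (t = x ∨ t = y ∨ t = z) := by
      intro t ht
      have : t ∈ ({x, y, z} : Set (Fin n)) := by rw [hset]; simpa using ht
      simpa using this
    obtain ⟨e1, e2, e3⟩ := sorted_eq hq'.1 hq'.2.1 hxy hyz (conv _ m1) (conv _ m2) (conv _ m3)
    simp only at e1 e2 e3 h2
    subst e1; subst e2; subst e3; subst h2; rfl
  -- existence/uniqueness for an interior edge
  have hinl : ∀ a b : Fin n, G.Adj a b → ∃! q, q ∈ Q ∧ K4Edge q s(Sum.inl a, Sum.inl b) := by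
    intro a b hGab
    have hmem : s(a, b) ∈ ⋃ i, (T i).edgeSet := by rw [hunion]; exact hGab
    obtain ⟨i, habi⟩ : ∃ i, (T i).Adj a b := by
      obtain ⟨s, ⟨i, rfl⟩, hs⟩ := hmem
      exact ⟨i, hs⟩
    obtain ⟨c, hac, hbc2, hseta⟩ := third (hT i) habi
    have hbc : (T i).Adj b c := hbc2
    have hABne := habi.ne
    have hACne := hac.ne
    have hBCne : b ≠ c := fun h => (T i).irrefl (h ▸ hbc)
    obtain ⟨x, y, z, hxy, hyz, hset⟩ := sort3 hABne hACne hBCne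
    have hmem' : ∀ t : Fin n, (t = x ∨ t = y ∨ t = z) → (t = a ∨ t = b ∨ t = c) := by
      intro t ht
      have : t ∈ ({a, b, c} : Set (Fin n)) := by rw [← hset]; simpa using ht
      simpa using this
    have hmem2 : ∀ t : Fin n, (t = a ∨ t = b ∨ t = c) → (t = x ∨ t = y ∨ t = z) := by
      intro t ht
      have : t ∈ ({x, y, z} : Set (Fin n)) := by rw [hset]; simpa using ht
      simpa using this
    have hadjall : ∀ u v : Fin n, (u = a ∨ u = b ∨ u = c) → (v = a ∨ v = b ∨ v = c) →
        u ≠ v → (T i).Adj u v := by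
      rintro u v (rfl | rfl | rfl) (rfl | rfl | rfl) huv
      · exact absurd rfl huv
      · exact habi
      · exact hac
      · exact habi.symm
      · exact absurd rfl huv
      · exact hbc
      · exact hac.symm
      · exact hbc.symm
      · exact absurd rfl huv
    have hqQ : ((x, y, z), i) ∈ Q := by
      refine ⟨hxy, hyz, ?_, ?_, ?_⟩
      · exact hadjall x y (hmem' x (Or.inl rfl)) (hmem' y (Or.inr (Or.inl rfl))) hxy.ne
      · exact hadjall x z (hmem' x (Or.inl rfl)) (hmem' z (Or.inr (Or.inr rfl))) (hxy.trans hyz).ne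
      · exact hadjall y z (hmem' y (Or.inr (Or.inl rfl))) (hmem' z (Or.inr (Or.inr rfl))) hyz.ne
    refine ⟨((x, y, z), i), ⟨hqQ, K4Edge_of_mem (hmem2 a (Or.inl rfl))
      (hmem2 b (Or.inr (Or.inl rfl))) hABne⟩, ?_⟩
    rintro q' ⟨hq'Q, hq'e⟩
    have hTab : (T q'.2).Adj a b := hTadj q' hq'Q hq'e
    have hii : q'.2 = i := by
      by_contra hne
      exact Set.disjoint_left.mp (hdisj hne) ((T q'.2).mem_edgeSet.mpr hTab)
        ((T i).mem_edgeSet.mpr habi)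
    have ham : a = q'.1.1 ∨ a = q'.1.2.1 ∨ a = q'.1.2.2 := mem_left_of_K4Edge hq'e
    have hcopy := hq'Q
    obtain ⟨-, -, e1, e2, e3⟩ := hcopy
    rw [hii] at e1 e2 e3
    obtain ⟨m1, m2, m3⟩ := triple_mem e1 e2 e3 ham hseta
    exact key_eq q' x y z a b c i hq'Q hii m1 m2 m3 hxy hyz hset
  -- existence/uniqueness for a spoke edge
  have hspoke : ∀ (a : Fin n) (w : Fin r), ∃! q, q ∈ Q ∧ K4Edge q s(Sum.inl a, Sum.inr w) := by
    intro a w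
    obtain ⟨b, c, hBCne, hab, hac, hbc, hseta⟩ := nbhd_struct (hT w) a
    have hABne := hab.ne
    have hACne := hac.ne
    obtain ⟨x, y, z, hxy, hyz, hset⟩ := sort3 hABne hACne hBCne
    have hmem' : ∀ t : Fin n, (t = x ∨ t = y ∨ t = z) → (t = a ∨ t = b ∨ t = c) := by
      intro t ht
      have : t ∈ ({a, b, c} : Set (Fin n)) := by rw [← hset]; simpa using ht
      simpa using this
    have hmem2 : ∀ t : Fin n, (t = a ∨ t = b ∨ t = c) → (t = x ∨ t = y ∨ t = z) := by
      intro t ht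
      have : t ∈ ({x, y, z} : Set (Fin n)) := by rw [hset]; simpa using ht
      simpa using this
    have hadjall : ∀ u v : Fin n, (u = a ∨ u = b ∨ u = c) → (v = a ∨ v = b ∨ v = c) →
        u ≠ v → (T w).Adj u v := by
      rintro u v (rfl | rfl | rfl) (rfl | rfl | rfl) huv
      · exact absurd rfl huv
      · exact hab
      · exact hac
      · exact hab.symm
      · exact absurd rfl huv
      · exact hbc
      · exact hac.symm
      · exact hbc.symm
      · exact absurd rfl huv
    have hqQ : ((x, y, z), w) ∈ Q := by
      refine ⟨hxy, hyz, ?_, ?_, ?_⟩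
      · exact hadjall x y (hmem' x (Or.inl rfl)) (hmem' y (Or.inr (Or.inl rfl))) hxy.ne
      · exact hadjall x z (hmem' x (Or.inl rfl)) (hmem' z (Or.inr (Or.inr rfl))) (hxy.trans hyz).ne
      · exact hadjall y z (hmem' y (Or.inr (Or.inl rfl))) (hmem' z (Or.inr (Or.inr rfl))) hyz.ne
    refine ⟨((x, y, z), w), ⟨hqQ, ?_⟩, ?_⟩
    · rw [K4Edge_spoke_iff]
      exact ⟨rfl, hmem2 a (Or.inl rfl)⟩
    rintro q' ⟨hq'Q, hq'e⟩
    rw [K4Edge_spoke_iff] at hq'e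
    obtain ⟨hw, ham⟩ := hq'e
    have hcopy := hq'Q
    obtain ⟨-, -, e1, e2, e3⟩ := hcopy
    rw [← hw] at e1 e2 e3
    obtain ⟨m1, m2, m3⟩ := triple_mem e1 e2 e3 ham hseta
    exact key_eq q' x y z a b c w hq'Q hw.symm m1 m2 m3 hxy hyz hset
  refine ⟨Q, ?_, ?_⟩
  · rintro ⟨⟨a, b, c⟩, i⟩ ⟨h1, h2, e1, e2, e3⟩
    exact ⟨h1.ne, (h1.trans h2).ne, h2.ne, hsub i e1, hsub i e2, hsub i e3⟩
  · intro e
    induction e using Sym2.ind with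
    | _ xv yv =>
      constructor
      · intro he
        rw [SimpleGraph.mem_edgeSet] at he
        rcases he with ⟨a, b, rfl, rfl, hGab⟩ | ⟨a, w, rfl, rfl⟩ | ⟨a, w, rfl, rfl⟩
        · exact hinl a b hGab
        · exact hspoke a w
        · rw [Sym2.eq_swap]; exact hspoke a w
      · rintro ⟨q, ⟨hqQ, hK⟩, -⟩
        obtain ⟨-, -, e1, e2, e3⟩ := hqQ
        rcases hK with h | h | h | h | h | h <;> rw [h]
        · exact memJ_inl.mpr (hsub _ e1)
        · exact memJ_inl.mpr (hsub _ e2)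
        · exact memJ_inl.mpr (hsub _ e3)
        · exact memJ_spoke
        · exact memJ_spoke
        · exact memJ_spoke
lemma backward_dir {n r : ℕ} (G : SimpleGraph (Fin n)) (Q : Set (K4Data n r))
    (hQK4 : ∀ q ∈ Q, IsK4 G q)
    (hJ : ∀ e, e ∈ (auxJ n r G).edgeSet ↔ ∃! q, q ∈ Q ∧ K4Edge q e) :
    ∃ T : Fin r → SimpleGraph (Fin n),
      (∀ i, IsTriangleFactor (T i)) ∧
      (Pairwise fun i j => Disjoint (T i).edgeSet (T j).edgeSet) ∧
      (⋃ i, (T i).edgeSet) = G.edgeSet := by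
  classical
  set T : Fin r → SimpleGraph (Fin n) := fun i =>
    { Adj := fun a b => a ≠ b ∧ ∃ q ∈ Q, q.2 = i ∧ K4Edge q s(Sum.inl a, Sum.inl b)
      symm := by
        constructor
        rintro a b ⟨hab, q, hq, h2, hK⟩
        exact ⟨hab.symm, q, hq, h2, by rwa [Sym2.eq_swap]⟩
      loopless := ⟨fun a h => h.1 rfl⟩ } with hTdef
  have hTAdj : ∀ (i : Fin r) (a b : Fin n), (T i).Adj a b ↔
      a ≠ b ∧ ∃ q ∈ Q, q.2 = i ∧ K4Edge q s(Sum.inl a, Sum.inl b) := fun _ _ _ => Iff.rfl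
  have key : ∀ (i : Fin r) (a : Fin n), ∃ b c, b ≠ c ∧ (T i).Adj b c ∧
      {u | (T i).Adj a u} = {b, c} := by
    intro i a
    obtain ⟨q, ⟨hqQ, hqK⟩, huq⟩ := (hJ s(Sum.inl a, Sum.inr i)).mp memJ_spoke
    rw [K4Edge_spoke_iff] at hqK
    obtain ⟨hi2, ham⟩ := hqK
    obtain ⟨d1, d2, d3, g1, g2, g3⟩ := hQK4 q hqQ
    have hsame : ∀ {u : Fin n} (q' : K4Data n r), q' ∈ Q → q'.2 = i →
        K4Edge q' s(Sum.inl a, Sum.inl u) → q' = q := by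
      intro u q' hq' h2 hK
      refine huq q' ⟨hq', ?_⟩
      rw [K4Edge_spoke_iff]
      refine ⟨h2.symm, ?_⟩
      rw [K4Edge_inl_iff] at hK; tauto
    rcases ham with ha | ha | ha
    · refine ⟨q.1.2.1, q.1.2.2, d3,
        ⟨d3, q, hqQ, hi2.symm, Or.inr (Or.inr (Or.inl rfl))⟩, ?_⟩
      ext u
      simp only [Set.mem_setOf_eq, Set.mem_insert_iff, Set.mem_singleton_iff]
      constructor
      · rintro ⟨hau, q', hq', h2, hK⟩
        have hq'q := hsame q' hq' h2 hK
        subst hq'q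
        rw [K4Edge_inl_iff] at hK
        rcases hK with ⟨h1, h2'⟩ | ⟨h1, h2'⟩ | ⟨h1, h2'⟩ | ⟨h1, h2'⟩ | ⟨h1, h2'⟩ | ⟨h1, h2'⟩
        · exact Or.inl h2'
        · exact absurd (ha.symm.trans h1) d1
        · exact Or.inr h2'
        · exact absurd (ha.symm.trans h1) d2
        · exact absurd (ha.symm.trans h1) d1
        · exact absurd (ha.symm.trans h1) d2
      · rintro (rfl | rfl)
        · exact ⟨by rw [ha]; exact d1, q, hqQ, hi2.symm, Or.inl (by rw [ha])⟩
        · exact ⟨by rw [ha]; exact d2, q, hqQ, hi2.symm, Or.inr (Or.inl (by rw [ha]))⟩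
    · refine ⟨q.1.1, q.1.2.2, d2,
        ⟨d2, q, hqQ, hi2.symm, Or.inr (Or.inl rfl)⟩, ?_⟩
      ext u
      simp only [Set.mem_setOf_eq, Set.mem_insert_iff, Set.mem_singleton_iff]
      constructor
      · rintro ⟨hau, q', hq', h2, hK⟩
        have hq'q := hsame q' hq' h2 hK
        subst hq'q
        rw [K4Edge_inl_iff] at hK
        rcases hK with ⟨h1, h2'⟩ | ⟨h1, h2'⟩ | ⟨h1, h2'⟩ | ⟨h1, h2'⟩ | ⟨h1, h2'⟩ | ⟨h1, h2'⟩
        · exact absurd (h1.symm.trans ha) d1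
        · exact Or.inl h2'
        · exact absurd (h1.symm.trans ha) d1
        · exact absurd (ha.symm.trans h1) d3
        · exact Or.inr h2'
        · exact absurd (ha.symm.trans h1) d3
      · rintro (rfl | rfl)
        · exact ⟨by rw [ha]; exact d1.symm, q, hqQ, hi2.symm,
            Or.inl (by rw [ha, Sym2.eq_swap])⟩
        · exact ⟨by rw [ha]; exact d3, q, hqQ, hi2.symm,
            Or.inr (Or.inr (Or.inl (by rw [ha])))⟩
    · refine ⟨q.1.1, q.1.2.1, d1,
        ⟨d1, q, hqQ, hi2.symm, Or.inl rfl⟩, ?_⟩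
      ext u
      simp only [Set.mem_setOf_eq, Set.mem_insert_iff, Set.mem_singleton_iff]
      constructor
      · rintro ⟨hau, q', hq', h2, hK⟩
        have hq'q := hsame q' hq' h2 hK
        subst hq'q
        rw [K4Edge_inl_iff] at hK
        rcases hK with ⟨h1, h2'⟩ | ⟨h1, h2'⟩ | ⟨h1, h2'⟩ | ⟨h1, h2'⟩ | ⟨h1, h2'⟩ | ⟨h1, h2'⟩
        · exact absurd (h1.symm.trans ha) d2
        · exact absurd (h1.symm.trans ha) d3
        · exact absurd (h1.symm.trans ha) d2
        · exact Or.inl h2'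
        · exact absurd (h1.symm.trans ha) d3
        · exact Or.inr h2'
      · rintro (rfl | rfl)
        · exact ⟨by rw [ha]; exact d2.symm, q, hqQ, hi2.symm,
            Or.inr (Or.inl (by rw [ha, Sym2.eq_swap]))⟩
        · exact ⟨by rw [ha]; exact d3.symm, q, hqQ, hi2.symm,
            Or.inr (Or.inr (Or.inl (by rw [ha, Sym2.eq_swap])))⟩
  refine ⟨T, ?_, ?_, ?_⟩
  · intro i
    constructor
    · intro v
      obtain ⟨b, c, hbc, -, hset⟩ := key i v
      rw [hset]
      exact Set.ncard_pair hbc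
    · intro u v w h1 h2 huw
      obtain ⟨b, c, hbc, hBC, hset⟩ := key i v
      have hu : u ∈ ({b, c} : Set (Fin n)) := hset ▸ h1.symm
      have hw : w ∈ ({b, c} : Set (Fin n)) := hset ▸ h2
      simp only [Set.mem_insert_iff, Set.mem_singleton_iff] at hu hw
      rcases hu with rfl | rfl <;> rcases hw with rfl | rfl
      · exact absurd rfl huw
      · exact hBC
      · exact hBC.symm
      · exact absurd rfl huw
  · intro i j hij
    rw [Set.disjoint_left]
    intro e
    induction e using Sym2.ind with
    | _ a b =>
      intro hei hej
      rw [SimpleGraph.mem_edgeSet] at hei hej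
      obtain ⟨hab, q, hqQ, h2, hK⟩ := hei
      obtain ⟨-, q', hq'Q, h2', hK'⟩ := hej
      have hGab : G.Adj a b := adj_of_K4 (hQK4 q hqQ) hK
      obtain ⟨q0, -, hu⟩ := (hJ s(Sum.inl a, Sum.inl b)).mp (memJ_inl.mpr hGab)
      have hqq' : q = q' := (hu q ⟨hqQ, hK⟩).trans (hu q' ⟨hq'Q, hK'⟩).symm
      exact hij (h2 ▸ h2' ▸ hqq' ▸ rfl)
  · ext e
    induction e using Sym2.ind with
    | _ a b =>
      simp only [Set.mem_iUnion, SimpleGraph.mem_edgeSet]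
      constructor
      · rintro ⟨i, -, q, hqQ, -, hK⟩
        exact adj_of_K4 (hQK4 q hqQ) hK
      · intro hGab
        obtain ⟨q, ⟨hqQ, hK⟩, -⟩ := (hJ s(Sum.inl a, Sum.inl b)).mp (memJ_inl.mpr hGab)
        exact ⟨q.2, hGab.ne, q, hqQ, rfl, hK⟩
/-- `G` decomposes into `r` triangle-factors iff the auxiliary graph `J` decomposes
into copies of `K₄` with three vertices in `V` and one in `W`. -/
theorem triangle_factorization_iff_K4_decomposition
    (n r : ℕ) (hn : 0 < n) (hr : 0 < r) (h3 : 3 ∣ n) (G : SimpleGraph (Fin n)) :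
    (∃ T : Fin r → SimpleGraph (Fin n),
        (∀ i, IsTriangleFactor (T i)) ∧
        (Pairwise fun i j => Disjoint (T i).edgeSet (T j).edgeSet) ∧
        (⋃ i, (T i).edgeSet) = G.edgeSet) ↔
      (∃ Q : Set (K4Data n r),
        (∀ q ∈ Q, IsK4 G q) ∧
        ∀ e, e ∈ (auxJ n r G).edgeSet ↔ ∃! q, q ∈ Q ∧ K4Edge q e) := by
  constructor
  · rintro ⟨T, hT, hdisj, hunion⟩
    exact forward_dir G T hT hdisj hunion
  · rintro ⟨Q, hQK4, hJ⟩
    exact backward_dir G Q hQK4 hJ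
end
end

section
/- Let ℓ ≥ 3 and let n and r be positive integers with ℓ dividing n, let G be a graph on a vertex set V with |V| = n, and let W be a set of r new vertices disjoint from V. Let J be the graph on V ∪ W whose edge set consists of the edges of G together with all pairs {v, w} with v ∈ V and w ∈ W (and no edges inside W). Then the edge set of G can be partitioned into r C_ℓ-factors of V if and only if the edge set of J can be partitioned into copies of the wheel W_ℓ each having its rim contained in V and its hub in W. -/
open scoped Classical

noncomputable section

/-- Cyclic successor on `Fin c`. -/
def finNext {c : ℕ} (i : Fin c) : Fin c :=
  ⟨(i.1 + 1) % c, Nat.mod_lt _ (Nat.lt_of_le_of_lt (Nat.zero_le _) i.2)⟩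

/-- A `C_ℓ`-factor: the graph of a fixed-point-free permutation all of whose orbits
have size exactly `ℓ`, i.e. a vertex-disjoint union of `ℓ`-cycles covering all
vertices. -/
def IsCycleFactor (ℓ : ℕ) {n : ℕ} (T : SimpleGraph (Fin n)) : Prop :=
  ∃ f : Equiv.Perm (Fin n),
    (∀ (v : Fin n) (k : ℕ), 0 < k → k < ℓ → (f ^ k) v ≠ v) ∧
    (∀ v, (f ^ ℓ) v = v) ∧
    (∀ u v, T.Adj u v ↔ f u = v ∨ f v = u)

/-- Data for a copy of the wheel `W_ℓ`: the rim cycle `g : Fin ℓ → V` and the hub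
`w ∈ W`. -/
abbrev WheelData (ℓ n r : ℕ) := (Fin ℓ → Fin n) × Fin r

/-- The copy is genuine: the rim is an `ℓ`-cycle of `G` (the spokes to the hub are
automatically present in `J`). -/
def IsWheelCopy {ℓ n r : ℕ} (G : SimpleGraph (Fin n)) (q : WheelData ℓ n r) : Prop :=
  Function.Injective q.1 ∧ ∀ i, G.Adj (q.1 i) (q.1 (finNext i))

/-- The `2ℓ` edges of the wheel copy `q`: rim edges and spokes. -/
def WheelEdge {ℓ n r : ℕ} (q : WheelData ℓ n r) (e : Sym2 (Fin n ⊕ Fin r)) : Prop :=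
  (∃ i, e = s(Sum.inl (q.1 i), Sum.inl (q.1 (finNext i)))) ∨
    (∃ i, e = s(Sum.inl (q.1 i), Sum.inr q.2))

/-! ### Auxiliary lemmas -/

lemma finNext_eq {c : ℕ} [NeZero c] (i : Fin c) : finNext i = i + 1 := by
  apply Fin.ext
  simp only [finNext, Fin.add_def, Fin.val_one']
  conv_lhs => rw [Nat.add_mod, Nat.mod_add_mod]

lemma finNext_injective {c : ℕ} : Function.Injective (finNext (c := c)) := by
  intro i j h
  haveI : NeZero c := ⟨i.pos.ne'⟩
  rw [finNext_eq, finNext_eq] at h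
  exact add_right_cancel h

lemma finNext_surj {c : ℕ} [NeZero c] (x : Fin c) : ∃ j, finNext j = x :=
  ⟨x - 1, by rw [finNext_eq]; exact sub_add_cancel x 1⟩

section PermAux

variable {n ℓ : ℕ} {p : Equiv.Perm (Fin n)}

lemma pow_mul_fix (hpow : ∀ w, (p ^ ℓ) w = w) :
    ∀ (q : ℕ) (w : Fin n), (p ^ (ℓ * q)) w = w := by
  intro q
  induction q with
  | zero => simp
  | succ q ih =>
    intro w
    rw [Nat.mul_succ, pow_add, Equiv.Perm.mul_apply, hpow w]
    exact ih w

lemma pow_mod_fix (hpow : ∀ w, (p ^ ℓ) w = w) (m : ℕ) (w : Fin n) :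
    (p ^ m) w = (p ^ (m % ℓ)) w := by
  conv_lhs => rw [← Nat.div_add_mod m ℓ]
  rw [pow_add, Equiv.Perm.mul_apply, pow_mul_fix hpow]

lemma pow_inj_of_lt (hfix : ∀ (v : Fin n) (k : ℕ), 0 < k → k < ℓ → (p ^ k) v ≠ v)
    {a b : ℕ} (ha : a < ℓ) (hb : b < ℓ) {v : Fin n} (h : (p ^ a) v = (p ^ b) v) :
    a = b := by
  rcases le_total a b with hab | hab
  · by_contra hne
    have hsub : (p ^ (b - a)) ((p ^ a) v) = (p ^ a) v := by
      rw [← Equiv.Perm.mul_apply, ← pow_add, Nat.sub_add_cancel hab, ← h]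
    exact hfix _ _ (by omega) (by omega) hsub
  · by_contra hne
    have hsub : (p ^ (a - b)) ((p ^ b) v) = (p ^ b) v := by
      rw [← Equiv.Perm.mul_apply, ← pow_add, Nat.sub_add_cancel hab, h]
    exact hfix _ _ (by omega) (by omega) hsub

/-- step along the rim -/
lemma pow_step (hpow : ∀ w, (p ^ ℓ) w = w) (v : Fin n) (j : Fin ℓ) :
    p ((p ^ (j.1)) v) = (p ^ ((finNext j).1)) v := by
  have hj := j.2
  by_cases h : j.1 + 1 = ℓ
  · have h0 : (finNext j).1 = 0 := by simp [finNext, h]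
    rw [h0, pow_zero]
    have := hpow v
    rw [← h, pow_succ', Equiv.Perm.mul_apply] at this
    simpa using this
  · have h0 : (finNext j).1 = j.1 + 1 := by
      simp only [finNext]; exact Nat.mod_eq_of_lt (by omega)
    rw [h0, pow_succ', Equiv.Perm.mul_apply]

def orbitF (ℓ : ℕ) {n : ℕ} (p : Equiv.Perm (Fin n)) (v : Fin n) : Finset (Fin n) :=
  insert v (Finset.image (fun k : Fin ℓ => (p ^ (k : ℕ)) v) Finset.univ)

lemma mem_orbitF (hℓ : 0 < ℓ) (hpow : ∀ w, (p ^ ℓ) w = w) {v x : Fin n} :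
    x ∈ orbitF ℓ p v ↔ ∃ m : ℕ, (p ^ m) v = x := by
  unfold orbitF
  simp only [Finset.mem_insert, Finset.mem_image, Finset.mem_univ, true_and]
  constructor
  · rintro (rfl | ⟨k, hk⟩)
    · exact ⟨0, by simp⟩
    · exact ⟨k, hk⟩
  · rintro ⟨m, rfl⟩
    right
    exact ⟨⟨m % ℓ, Nat.mod_lt _ hℓ⟩, (pow_mod_fix hpow m v).symm⟩

lemma orbitF_eq_of_mem (hℓ : 0 < ℓ) (hpow : ∀ w, (p ^ ℓ) w = w) {v x : Fin n}
    (hx : x ∈ orbitF ℓ p v) : orbitF ℓ p x = orbitF ℓ p v := by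
  rw [mem_orbitF hℓ hpow] at hx
  obtain ⟨m, rfl⟩ := hx
  ext y
  rw [mem_orbitF hℓ hpow, mem_orbitF hℓ hpow]
  constructor
  · rintro ⟨a, rfl⟩
    exact ⟨a + m, by rw [pow_add, Equiv.Perm.mul_apply]⟩
  · rintro ⟨b, rfl⟩
    have hm : m ≤ ℓ * (m + 1) := le_trans (Nat.le_succ m) (Nat.le_mul_of_pos_left _ hℓ)
    refine ⟨b + (ℓ * (m + 1) - m), ?_⟩
    rw [← Equiv.Perm.mul_apply, ← pow_add]
    have heq : b + (ℓ * (m + 1) - m) + m = b + ℓ * (m + 1) := by omega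
    rw [heq, pow_add, Equiv.Perm.mul_apply, pow_mul_fix hpow]

def repF (ℓ : ℕ) {n : ℕ} (p : Equiv.Perm (Fin n)) (v : Fin n) : Fin n :=
  (orbitF ℓ p v).min' ⟨v, Finset.mem_insert_self _ _⟩

lemma repF_mem {v : Fin n} : repF ℓ p v ∈ orbitF ℓ p v := Finset.min'_mem _ _

lemma repF_eq_of_mem (hℓ : 0 < ℓ) (hpow : ∀ w, (p ^ ℓ) w = w) {v x : Fin n}
    (hx : x ∈ orbitF ℓ p v) : repF ℓ p x = repF ℓ p v := by
  unfold repF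
  apply le_antisymm
  · exact Finset.min'_le _ _ (by rw [orbitF_eq_of_mem hℓ hpow hx]; exact Finset.min'_mem _ _)
  · exact Finset.min'_le _ _ (by rw [← orbitF_eq_of_mem hℓ hpow hx]; exact Finset.min'_mem _ _)

lemma repF_idem (hℓ : 0 < ℓ) (hpow : ∀ w, (p ^ ℓ) w = w) (v : Fin n) :
    repF ℓ p (repF ℓ p v) = repF ℓ p v :=
  repF_eq_of_mem hℓ hpow repF_mem

lemma mem_orbitF_repF (hℓ : 0 < ℓ) (hpow : ∀ w, (p ^ ℓ) w = w) (v : Fin n) :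
    v ∈ orbitF ℓ p (repF ℓ p v) := by
  rw [orbitF_eq_of_mem hℓ hpow repF_mem]
  exact Finset.mem_insert_self _ _

end PermAux

section AuxJAux

variable {n r : ℕ} {G : SimpleGraph (Fin n)}

lemma auxJ_adj_iff {x y : Fin n ⊕ Fin r} : (auxJ n r G).Adj x y ↔
    ((∃ a b, x = Sum.inl a ∧ y = Sum.inl b ∧ G.Adj a b) ∨
      (∃ a w, x = Sum.inl a ∧ y = Sum.inr w) ∨
      (∃ a w, x = Sum.inr w ∧ y = Sum.inl a)) := Iff.rfl

lemma auxJ_adj_inl_inl {a b : Fin n} :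
    (auxJ n r G).Adj (Sum.inl a : Fin n ⊕ Fin r) (Sum.inl b) ↔ G.Adj a b := by
  rw [auxJ_adj_iff]; simp

lemma auxJ_adj_inl_inr {a : Fin n} {w : Fin r} :
    (auxJ n r G).Adj (Sum.inl a) (Sum.inr w) := by
  rw [auxJ_adj_iff]; exact Or.inr (Or.inl ⟨a, w, rfl, rfl⟩)

lemma auxJ_not_adj_inr_inr {w w' : Fin r} :
    ¬ (auxJ n r G).Adj (Sum.inr w : Fin n ⊕ Fin r) (Sum.inr w') := by
  rw [auxJ_adj_iff]; simp

end AuxJAux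

open Fin.NatCast

/-- `G` decomposes into `r` `C_ℓ`-factors iff the auxiliary graph `J` decomposes into
copies of the wheel `W_ℓ` with rim in `V` and hub in `W`. -/
theorem cycle_factorization_iff_wheel_decomposition
    (ℓ n r : ℕ) (hℓ : 3 ≤ ℓ) (hn : 0 < n) (hr : 0 < r) (hd : ℓ ∣ n)
    (G : SimpleGraph (Fin n)) :
    (∃ T : Fin r → SimpleGraph (Fin n),
        (∀ i, IsCycleFactor ℓ (T i)) ∧
        (Pairwise fun i j => Disjoint (T i).edgeSet (T j).edgeSet) ∧
        (⋃ i, (T i).edgeSet) = G.edgeSet) ↔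
      (∃ Q : Set (WheelData ℓ n r),
        (∀ q ∈ Q, IsWheelCopy G q) ∧
        ∀ e, e ∈ (auxJ n r G).edgeSet ↔ ∃! q, q ∈ Q ∧ WheelEdge q e) := by
  have hℓ0 : 0 < ℓ := by omega
  haveI : NeZero ℓ := ⟨by omega⟩
  constructor
  · rintro ⟨T, hTfac, hTdisj, hTun⟩
    choose f hfix hpow hadj using hTfac
    set Q : Set (WheelData ℓ n r) :=
      {q | ∃ v : Fin n, repF ℓ (f q.2) v = v ∧ q.1 = fun j : Fin ℓ => ((f q.2) ^ (j : ℕ)) v}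
      with hQdef
    have hGadj : ∀ i u v, (T i).Adj u v → G.Adj u v := by
      intro i u v h
      have hsub : (T i).edgeSet ⊆ G.edgeSet := by
        rw [← hTun]; exact Set.subset_iUnion (fun i => (T i).edgeSet) i
      exact (G.mem_edgeSet).1 (hsub (((T i).mem_edgeSet).2 h))
    have hstep : ∀ (i : Fin r) (v : Fin n) (j : Fin ℓ),
        (f i) (((f i) ^ (j : ℕ)) v) = ((f i) ^ (((finNext j) : Fin ℓ) : ℕ)) v :=
      fun i v j => pow_step (hpow i) v j
    have hbase : ∀ (i : Fin r) (v : Fin n) (j : Fin ℓ) (a : Fin n),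
        repF ℓ (f i) v = v → ((f i) ^ (j : ℕ)) v = a → v = repF ℓ (f i) a := by
      intro i v j a hv ha
      have hmem : a ∈ orbitF ℓ (f i) v := (mem_orbitF hℓ0 (hpow i)).2 ⟨j, ha⟩
      rw [repF_eq_of_mem hℓ0 (hpow i) hmem]
      exact hv.symm
    have hwheel : ∀ (i : Fin r) (a : Fin n), ∃ (v : Fin n) (k : Fin ℓ),
        repF ℓ (f i) v = v ∧ ((f i) ^ (k : ℕ)) v = a ∧ v = repF ℓ (f i) a := by
      intro i a
      obtain ⟨m, hm⟩ := (mem_orbitF hℓ0 (hpow i)).1 (mem_orbitF_repF hℓ0 (hpow i) a)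
      refine ⟨repF ℓ (f i) a, ⟨m % ℓ, Nat.mod_lt _ hℓ0⟩, repF_idem hℓ0 (hpow i) a, ?_, rfl⟩
      rw [← pow_mod_fix (hpow i)]
      exact hm
    have hcopy : ∀ q ∈ Q, IsWheelCopy G q := by
      rintro ⟨g, i⟩ ⟨v, hv, hg⟩
      replace hg : g = fun j : Fin ℓ => ((f i) ^ (j : ℕ)) v := hg
      subst hg
      constructor
      · intro j j' hjj'
        exact Fin.ext (pow_inj_of_lt (hfix i) j.2 j'.2 hjj')
      · intro j
        exact hGadj i _ _ ((hadj i _ _).2 (Or.inl (hstep i v j)))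
    have hrim : ∀ (a b : Fin n) (q : WheelData ℓ n r), q ∈ Q →
        WheelEdge q (s(Sum.inl a, Sum.inl b)) →
        (T q.2).Adj a b ∧ ∃ j, q.1 j = a := by
      rintro a b ⟨g, i⟩ ⟨v, hv, hg⟩ hWE
      simp only at hg
      subst hg
      rcases hWE with ⟨j, hj⟩ | ⟨j, hj⟩
      · simp only [Sym2.eq_iff, Sum.inl.injEq] at hj
        rcases hj with ⟨h1, h2⟩ | ⟨h1, h2⟩
        · subst h1; subst h2
          exact ⟨(hadj i _ _).2 (Or.inl (hstep i v j)), ⟨j, rfl⟩⟩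
        · subst h1; subst h2
          exact ⟨((hadj i _ _).2 (Or.inl (hstep i v j))).symm, ⟨finNext j, rfl⟩⟩
      · exfalso
        simp [Sym2.eq_iff] at hj
    have hbase' : ∀ (a : Fin n) (q : WheelData ℓ n r), q ∈ Q → (∃ j, q.1 j = a) →
        q = (fun j : Fin ℓ => ((f q.2) ^ (j : ℕ)) (repF ℓ (f q.2) a), q.2) := by
      rintro a ⟨g, i⟩ ⟨v, hv, hg⟩ ⟨j, hj⟩
      replace hg : g = fun j : Fin ℓ => ((f i) ^ (j : ℕ)) v := hg
      subst hg
      simp only at hj ⊢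
      have : v = repF ℓ (f i) a := hbase i v j a hv hj
      rw [← this]
    have hspoke : ∀ (a : Fin n) (w : Fin r),
        ∃! q, q ∈ Q ∧ WheelEdge q (s(Sum.inl a, Sum.inr w) : Sym2 (Fin n ⊕ Fin r)) := by
      intro a w
      obtain ⟨v, k, hv, hk, hva⟩ := hwheel w a
      refine ⟨(fun j : Fin ℓ => ((f w) ^ (j : ℕ)) v, w), ⟨⟨v, hv, rfl⟩, Or.inr ⟨k, ?_⟩⟩, ?_⟩
      · simp only
        rw [hk]
      · rintro q' ⟨hq'Q, hq'E⟩
        have haon : ∃ j, q'.1 j = a := by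
          rcases hq'E with ⟨j, hj⟩ | ⟨j, hj⟩
          · exfalso; simp [Sym2.eq_iff] at hj
          · simp only [Sym2.eq_iff] at hj
            rcases hj with ⟨h1, h2⟩ | ⟨h1, h2⟩
            · exact ⟨j, (Sum.inl.inj h1).symm⟩
            · exact absurd h1 (by simp)
        have hhub : q'.2 = w := by
          rcases hq'E with ⟨j, hj⟩ | ⟨j, hj⟩
          · exfalso; simp [Sym2.eq_iff] at hj
          · simp only [Sym2.eq_iff] at hj
            rcases hj with ⟨h1, h2⟩ | ⟨h1, h2⟩
            · exact (Sum.inr.inj h2).symm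
            · exact absurd h1 (by simp)
        have := hbase' a q' hq'Q haon
        rw [this, hhub]
        have hva' : repF ℓ (f w) a = v := hva.symm
        rw [hva']
    refine ⟨Q, hcopy, ?_⟩
    intro e
    induction e using Sym2.ind with
    | _ x y =>
      rcases x with a | w <;> rcases y with b | w'
      · rw [SimpleGraph.mem_edgeSet, auxJ_adj_inl_inl]
        constructor
        · intro hab
          have hme : s(a, b) ∈ G.edgeSet := hab
          rw [← hTun] at hme
          obtain ⟨i, hi⟩ := Set.mem_iUnion.1 hme
          have hTab : (T i).Adj a b := ((T i).mem_edgeSet).1 hi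
          have hstab : s(a, b) ∈ (T i).edgeSet := hi
          have hcases := (hadj i a b).1 hTab
          have hexist : ∃ q, (q ∈ Q ∧ WheelEdge q (s(Sum.inl a, Sum.inl b))) ∧
              (∃ j, q.1 j = a) ∧ q.2 = i := by
            rcases hcases with hfab | hfba
            · obtain ⟨v, k, hv, hk, -⟩ := hwheel i a
              refine ⟨(fun j : Fin ℓ => ((f i) ^ (j : ℕ)) v, i), ⟨⟨v, hv, rfl⟩, Or.inl ⟨k, ?_⟩⟩,
                ⟨k, hk⟩, rfl⟩
              simp only
              have h2 : ((f i) ^ (((finNext k) : Fin ℓ) : ℕ)) v = b := by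
                rw [← hstep i v k, hk, hfab]
              rw [hk, h2]
            · obtain ⟨v, k, hv, hk, -⟩ := hwheel i b
              have h2 : ((f i) ^ (((finNext k) : Fin ℓ) : ℕ)) v = a := by
                rw [← hstep i v k, hk, hfba]
              refine ⟨(fun j : Fin ℓ => ((f i) ^ (j : ℕ)) v, i), ⟨⟨v, hv, rfl⟩, Or.inl ⟨k, ?_⟩⟩,
                ⟨finNext k, h2⟩, rfl⟩
              simp only
              rw [hk, h2, Sym2.eq_swap]
          obtain ⟨q₀, hq₀, haon₀, hhub₀⟩ := hexist
          refine ⟨q₀, hq₀, ?_⟩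
          rintro q' ⟨hq'Q, hq'E⟩
          obtain ⟨hT', haon'⟩ := hrim a b q' hq'Q hq'E
          have hhub' : q'.2 = i := by
            by_contra hne
            have hdisj := hTdisj hne
            have h1 : s(a, b) ∈ (T q'.2).edgeSet := ((T q'.2).mem_edgeSet).2 hT'
            exact Set.disjoint_left.1 hdisj h1 hstab
          rw [hbase' a q' hq'Q haon', hbase' a q₀ hq₀.1 haon₀, hhub', hhub₀]
        · rintro ⟨q, ⟨hqQ, hqE⟩, -⟩
          exact hGadj q.2 a b (hrim a b q hqQ hqE).1
      · rw [SimpleGraph.mem_edgeSet]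
        simp only [auxJ_adj_inl_inr, true_iff]
        exact hspoke a w'
      · rw [Sym2.eq_swap, SimpleGraph.mem_edgeSet]
        simp only [auxJ_adj_inl_inr, true_iff]
        exact hspoke b w
      · rw [SimpleGraph.mem_edgeSet]
        constructor
        · intro h
          exact absurd h auxJ_not_adj_inr_inr
        · rintro ⟨q, ⟨hqQ, (⟨j, hj⟩ | ⟨j, hj⟩)⟩, -⟩ <;> simp [Sym2.eq_iff] at hj
  · rintro ⟨Q, hcopy, hedge⟩
    have hu : ∀ (v : Fin n) (i : Fin r),
        ∃! q, q ∈ Q ∧ WheelEdge q (s(Sum.inl v, Sum.inr i) : Sym2 (Fin n ⊕ Fin r)) :=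
      fun v i => (hedge _).1 (((auxJ n r G).mem_edgeSet).2 auxJ_adj_inl_inr)
    have hu' : ∀ (v : Fin n) (i : Fin r),
        ∃ q, (q ∈ Q ∧ WheelEdge q (s(Sum.inl v, Sum.inr i) : Sym2 (Fin n ⊕ Fin r))) ∧
          ∀ y, (y ∈ Q ∧ WheelEdge y (s(Sum.inl v, Sum.inr i) : Sym2 (Fin n ⊕ Fin r))) →
            y = q := hu
    choose Φ hΦ hΦu using hu'
    have hΦQ : ∀ v i, Φ v i ∈ Q := fun v i => (hΦ v i).1
    have hΦE : ∀ v i, WheelEdge (Φ v i) (s(Sum.inl v, Sum.inr i) : Sym2 (Fin n ⊕ Fin r)) :=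
      fun v i => (hΦ v i).2
    have hspoke : ∀ v i, (Φ v i).2 = i ∧ ∃ j, (Φ v i).1 j = v := by
      intro v i
      rcases hΦE v i with ⟨j, hj⟩ | ⟨j, hj⟩
      · exfalso; simp [Sym2.eq_iff] at hj
      · simp only [Sym2.eq_iff] at hj
        rcases hj with ⟨h1, h2⟩ | ⟨h1, h2⟩
        · exact ⟨(Sum.inr.inj h2).symm, ⟨j, (Sum.inl.inj h1).symm⟩⟩
        · exact absurd h1 (by simp)
    have hhub : ∀ v i, (Φ v i).2 = i := fun v i => (hspoke v i).1
    choose idx hidx using fun v i => (hspoke v i).2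
    have key : ∀ q ∈ Q, ∀ (j : Fin ℓ), Φ (q.1 j) q.2 = q := by
      intro q hq j
      exact (hΦu (q.1 j) q.2 q ⟨hq, Or.inr ⟨j, rfl⟩⟩).symm
    have hFinj : ∀ i : Fin r,
        Function.Injective (fun v : Fin n => (Φ v i).1 (finNext (idx v i))) := by
      intro i u u' h
      simp only at h
      have h1 : Φ ((Φ u i).1 (finNext (idx u i))) i = Φ u i := by
        have hk := key (Φ u i) (hΦQ u i) (finNext (idx u i))
        rw [hhub u i] at hk
        exact hk
      have h2 : Φ ((Φ u' i).1 (finNext (idx u' i))) i = Φ u' i := by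
        have hk := key (Φ u' i) (hΦQ u' i) (finNext (idx u' i))
        rw [hhub u' i] at hk
        exact hk
      have h12 : Φ u i = Φ u' i := by rw [← h1, ← h2, h]
      rw [← h12] at h
      have h4 : idx u i = idx u' i := finNext_injective ((hcopy _ (hΦQ u i)).1 h)
      rw [← hidx u i, ← hidx u' i, ← h12, ← h4]
    let fp : Fin r → Equiv.Perm (Fin n) := fun i =>
      Equiv.ofBijective _ ((Finite.injective_iff_bijective).1 (hFinj i))
    have hfp : ∀ i v, fp i v = (Φ v i).1 (finNext (idx v i)) := fun i v => rfl
    have hfpstep : ∀ (i : Fin r), ∀ q ∈ Q, q.2 = i → ∀ (j : Fin ℓ),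
        fp i (q.1 j) = q.1 (finNext j) := by
      intro i q hq hqi j
      have h1 : Φ (q.1 j) i = q := by rw [← hqi]; exact key q hq j
      have h2 : idx (q.1 j) i = j := by
        apply (hcopy q hq).1
        have h3 := hidx (q.1 j) i
        rw [h1] at h3
        exact h3
      rw [hfp, h1, h2]
    have hpowgen : ∀ (i : Fin r), ∀ q ∈ Q, q.2 = i → ∀ (k : ℕ) (j : Fin ℓ),
        ((fp i) ^ k) (q.1 j) = q.1 (j + (k : Fin ℓ)) := by
      intro i q hq hqi k
      induction k with
      | zero => intro j; simp
      | succ k ih =>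
        intro j
        rw [pow_succ, Equiv.Perm.mul_apply, hfpstep i q hq hqi j, ih (finNext j),
          finNext_eq]
        congr 1
        push_cast
        abel
    have hfpfix : ∀ (i : Fin r) (v : Fin n), ((fp i) ^ ℓ) v = v := by
      intro i v
      have h1 := hpowgen i (Φ v i) (hΦQ v i) (hhub v i) ℓ (idx v i)
      rw [hidx v i] at h1
      rw [h1, Fin.natCast_self, add_zero, hidx v i]
    have hfpfree : ∀ (i : Fin r) (v : Fin n) (k : ℕ), 0 < k → k < ℓ →
        ((fp i) ^ k) v ≠ v := by
      intro i v k hk0 hkℓ hcon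
      have h1 := hpowgen i (Φ v i) (hΦQ v i) (hhub v i) k (idx v i)
      rw [hidx v i, hcon] at h1
      have h2 : idx v i = idx v i + (k : Fin ℓ) := by
        apply (hcopy _ (hΦQ v i)).1
        rw [hidx v i]
        exact h1
      have h3 : (k : Fin ℓ) = 0 := by
        have := h2.symm
        rwa [add_eq_left] at this
      have h4 : ((k : Fin ℓ) : ℕ) = k % ℓ := Fin.val_natCast k ℓ
      rw [h3] at h4
      simp only [Fin.val_zero] at h4
      rw [Nat.mod_eq_of_lt hkℓ] at h4
      omega
    refine ⟨fun i =>
      { Adj := fun u v => fp i u = v ∨ fp i v = u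
        symm := ⟨fun u v h => Or.symm h⟩
        loopless := ⟨fun v h => by
          rcases h with h | h <;>
            exact hfpfree i v 1 one_pos (by omega) (by rw [pow_one]; exact h)⟩ },
      fun i => ⟨fp i, hfpfree i, hfpfix i, fun u v => Iff.rfl⟩, ?_, ?_⟩
    · -- pairwise disjoint
      intro i j hij
      rw [Set.disjoint_left]
      intro e hei hej
      induction e using Sym2.ind with
      | _ u v =>
        have hadj_i : fp i u = v ∨ fp i v = u := hei
        have hadj_j : fp j u = v ∨ fp j v = u := hej
        have hGuv : G.Adj u v := by
          rcases hadj_i with h | h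
          · have hG := (hcopy _ (hΦQ u i)).2 (idx u i)
            rw [hidx u i] at hG
            rw [← h, hfp]
            exact hG
          · have hG := (hcopy _ (hΦQ v i)).2 (idx v i)
            rw [hidx v i] at hG
            rw [← h, hfp]
            exact hG.symm
        have hqedge : ∀ (m : Fin r), (fp m u = v ∨ fp m v = u) →
            ∃ q, (q ∈ Q ∧ WheelEdge q (s(Sum.inl u, Sum.inl v))) ∧ q.2 = m := by
          intro m hm
          rcases hm with h | h
          · refine ⟨Φ u m, ⟨hΦQ u m, Or.inl ⟨idx u m, ?_⟩⟩, hhub u m⟩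
            rw [hidx u m]
            have h' : (Φ u m).1 (finNext (idx u m)) = v := h
            rw [h']
          · refine ⟨Φ v m, ⟨hΦQ v m, Or.inl ⟨idx v m, ?_⟩⟩, hhub v m⟩
            rw [hidx v m]
            have h' : (Φ v m).1 (finNext (idx v m)) = u := h
            rw [h', Sym2.eq_swap]
        obtain ⟨qi, hqi, hqi2⟩ := hqedge i hadj_i
        obtain ⟨qj, hqj, hqj2⟩ := hqedge j hadj_j
        have hJ : (s(Sum.inl u, Sum.inl v) : Sym2 (Fin n ⊕ Fin r)) ∈ (auxJ n r G).edgeSet :=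
          ((auxJ n r G).mem_edgeSet).2 (auxJ_adj_inl_inl.2 hGuv)
        obtain ⟨q₀, -, hq₀u⟩ := (hedge _).1 hJ
        have : qi = qj := by rw [hq₀u qi hqi, hq₀u qj hqj]
        exact hij (by rw [← hqi2, this, hqj2])
    · -- union of edge sets
      apply Set.Subset.antisymm
      · apply Set.iUnion_subset
        intro i
        have hle : (fun u v => fp i u = v ∨ fp i v = u : Fin n → Fin n → Prop) ≤ G.Adj := by
          intro u v h
          rcases h with h | h
          · have hG := (hcopy _ (hΦQ u i)).2 (idx u i)
            rw [hidx u i] at hG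
            rw [← h, hfp]
            exact hG
          · have hG := (hcopy _ (hΦQ v i)).2 (idx v i)
            rw [hidx v i] at hG
            rw [← h, hfp]
            exact hG.symm
        exact SimpleGraph.edgeSet_mono (fun {u v} h => hle u v h)
      · intro e he
        induction e using Sym2.ind with
        | _ a b =>
          have hab : G.Adj a b := (G.mem_edgeSet).1 he
          have hJ : (s(Sum.inl a, Sum.inl b) : Sym2 (Fin n ⊕ Fin r)) ∈
              (auxJ n r G).edgeSet :=
            ((auxJ n r G).mem_edgeSet).2 (auxJ_adj_inl_inl.2 hab)
          obtain ⟨q, ⟨hqQ, hqE⟩, -⟩ := (hedge _).1 hJ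
          rcases hqE with ⟨j, hj⟩ | ⟨j, hj⟩
          · simp only [Sym2.eq_iff, Sum.inl.injEq] at hj
            rcases hj with ⟨h1, h2⟩ | ⟨h1, h2⟩
            · refine Set.mem_iUnion.2 ⟨q.2, ?_⟩
              have : fp q.2 a = b := by
                rw [h1, hfpstep q.2 q hqQ rfl j, ← h2]
              exact Or.inl this
            · refine Set.mem_iUnion.2 ⟨q.2, ?_⟩
              have : fp q.2 b = a := by
                rw [h2, hfpstep q.2 q hqQ rfl j, ← h1]
              exact Or.inr this
          · exfalso; simp [Sym2.eq_iff] at hj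
end
end

section
/- Let K ≥ 3 and let F be a graph on n vertices that is a vertex-disjoint union of cycles covering all n vertices, such that at least n/2 vertices of F lie on cycles of length at least K. Then F has a subgraph F¹ whose number of edges satisfies n/2 ≤ e(F¹) ≤ n/2 + 2K and whose connected components are cycles of length at least K together with at most one path of length at least K. -/
open scoped Classical

noncomputable section

/-- The degree of a vertex in a simple graph, via set cardinality. -/
def gDeg {n : ℕ} (G : SimpleGraph (Fin n)) (v : Fin n) : ℕ := {u : Fin n | G.Adj v u}.ncard

/-- The number of vertices in the connected component of `v`. -/
def compCard {n : ℕ} (G : SimpleGraph (Fin n)) (v : Fin n) : ℕ :=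
  {u : Fin n | G.Reachable v u}.ncard

/-- The number of edges in the connected component of `v`. -/
def compEdges {n : ℕ} (G : SimpleGraph (Fin n)) (v : Fin n) : ℕ :=
  {e ∈ G.edgeSet | ∃ u, u ∈ e ∧ G.Reachable v u}.ncard

/-!
Take a set `S` of long cycles of `F`, minimal in number among those covering at least
`⌈n/2⌉` vertices. If these cycles have at most `n/2 + 2K` edges in total, they form `F¹`.
Otherwise drop one cycle `C` of `S`: the remaining ones have fewer than `⌈n/2⌉` edges, so `C`
is longer than `2K`, and a path of length `max K (⌈n/2⌉ - e(S \ C))` inside `C` completes them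
to a subgraph with between `n/2` and `n/2 + 2K` edges.
-/

namespace SimpleGraph

variable {V : Type*} {G H : SimpleGraph V}

lemma neighborSet_eq_empty_of_notMem_support {v : V} (hv : v ∉ G.support) :
    G.neighborSet v = ∅ :=
  Set.eq_empty_of_forall_notMem fun _ h => hv h.mem_support_left

lemma neighborSet_sup_of_notMem_support_right {v : V} (hv : v ∉ H.support) :
    (G ⊔ H).neighborSet v = G.neighborSet v := by
  rw [neighborSet_sup, neighborSet_eq_empty_of_notMem_support hv, Set.union_empty]

lemma neighborSet_sup_of_notMem_support_left {v : V} (hv : v ∉ G.support) :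
    (G ⊔ H).neighborSet v = H.neighborSet v := by
  rw [sup_comm, neighborSet_sup_of_notMem_support_right hv]

def restrictComponents (G : SimpleGraph V) (S : Set G.ConnectedComponent) : SimpleGraph V where
  Adj u w := G.Adj u w ∧ G.connectedComponentMk u ∈ S
  symm := ⟨fun _ _ h =>
    ⟨h.1.symm, ConnectedComponent.connectedComponentMk_eq_of_adj h.1 ▸ h.2⟩⟩

section restrictComponents

variable {S : Set G.ConnectedComponent}

@[simp]
lemma restrictComponents_adj {u w : V} :
    (G.restrictComponents S).Adj u w ↔ G.Adj u w ∧ G.connectedComponentMk u ∈ S := Iff.rfl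

lemma restrictComponents_le : G.restrictComponents S ≤ G :=
  fun _ _ h => (restrictComponents_adj.mp h).1

lemma neighborSet_restrictComponents_of_mem {v : V} (hv : G.connectedComponentMk v ∈ S) :
    (G.restrictComponents S).neighborSet v = G.neighborSet v := by
  ext w
  simp [hv]

lemma connectedComponentMk_mem_of_mem_support_restrictComponents {v : V}
    (hv : v ∈ (G.restrictComponents S).support) : G.connectedComponentMk v ∈ S :=
  (restrictComponents_adj.mp ((mem_support _).mp hv).choose_spec).2

lemma Walk.reachable_restrictComponents :
    ∀ {v u : V}, G.Walk v u → G.connectedComponentMk v ∈ S →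
      (G.restrictComponents S).Reachable v u
  | _, _, .nil, _ => Reachable.refl _
  | _, _, .cons h p, hv =>
    (Adj.reachable (restrictComponents_adj.mpr ⟨h, hv⟩)).trans
      (p.reachable_restrictComponents (ConnectedComponent.connectedComponentMk_eq_of_adj h ▸ hv))

end restrictComponents

lemma ncard_setOf_connectedComponentMk_mem [Finite V] (S : Finset G.ConnectedComponent) :
    {v | G.connectedComponentMk v ∈ S}.ncard = ∑ c ∈ S, c.supp.ncard := by
  have := Fintype.ofFinite V
  rw [Set.ncard_eq_toFinset_card', Finset.card_eq_sum_card_fiberwise (f := G.connectedComponentMk)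
    (t := S) (fun v hv => by simpa using hv)]
  refine Finset.sum_congr rfl fun c hc => ?_
  rw [Set.ncard_eq_toFinset_card']
  congr 1
  ext v
  simp only [Set.mem_toFinset, Set.mem_ofPred_eq, Finset.mem_filter,
    ConnectedComponent.mem_supp_iff]
  exact ⟨fun h => h.2, fun h => ⟨h ▸ hc, h⟩⟩

namespace Walk

variable {u v : V}

lemma mem_support_of_mem_support_spanningCoe_toSubgraph (p : G.Walk u v) {x : V}
    (hx : x ∈ p.toSubgraph.spanningCoe.support) : x ∈ p.support :=
  (mem_verts_toSubgraph p).mp (p.toSubgraph.edge_vert ((mem_support _).mp hx).choose_spec)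

lemma connectedComponentMk_eq_of_mem_support_spanningCoe_toSubgraph (p : G.Walk u v) {x : V}
    (hx : x ∈ p.toSubgraph.spanningCoe.support) :
    G.connectedComponentMk x = G.connectedComponentMk u :=
  ConnectedComponent.eq.mpr
    (p.takeUntil x (p.mem_support_of_mem_support_spanningCoe_toSubgraph hx)).reachable.symm

lemma reachable_spanningCoe_toSubgraph (p : G.Walk u v) {x : V} (hx : x ∈ p.support) :
    p.toSubgraph.spanningCoe.Reachable u x := by
  induction p with
  | nil => rw [support_nil, List.mem_singleton] at hx; exact hx ▸ Reachable.refl _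
  | cons h p ih =>
    rw [support_cons, List.mem_cons] at hx
    rcases hx with rfl | hx
    · exact Reachable.refl _
    · exact (Adj.reachable (Or.inl (subgraphOfAdj_adj_self h))).trans
        ((ih hx).mono (Subgraph.spanningCoe_le_of_le le_sup_right))

lemma IsCycle.ncard_verts_toSubgraph {p : G.Walk u u} (hp : p.IsCycle) :
    p.toSubgraph.verts.ncard = p.length := by
  have htail : {x | x ∈ p.support} = {x | x ∈ p.support.tail} := by
    ext x
    rw [Set.mem_ofPred_eq, Set.mem_ofPred_eq, ← p.cons_tail_support, List.mem_cons,
      List.tail_cons, or_iff_right_iff_imp]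
    rintro rfl
    exact end_mem_tail_support hp.not_nil
  rw [verts_toSubgraph, htail, ← List.coe_toFinset, Set.ncard_coe_finset,
    List.toFinset_card_of_nodup hp.support_nodup, List.length_tail, length_support,
    Nat.add_sub_cancel]

lemma IsTrail.ncard_edgeSet_spanningCoe_toSubgraph {p : G.Walk u v} (hp : p.IsTrail) :
    p.toSubgraph.spanningCoe.edgeSet.ncard = p.length := by
  rw [Subgraph.edgeSet_spanningCoe, edgeSet_toSubgraph, Walk.edgeSet, ← List.coe_toFinset,
    Set.ncard_coe_finset, List.toFinset_card_of_nodup hp.edges_nodup, length_edges]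

lemma IsPath.setOf_ncard_neighborSet_toSubgraph_eq_one {p : G.Walk u v} (hp : p.IsPath)
    (hnil : ¬p.Nil) : {x | (p.toSubgraph.neighborSet x).ncard = 1} = {u, v} := by
  ext x
  refine ⟨fun hx => ?_, ?_⟩
  · obtain ⟨w, hw⟩ := Set.nonempty_of_ncard_ne_zero (s := p.toSubgraph.neighborSet x) (by
      rw [Set.mem_ofPred_eq.mp hx]; decide)
    obtain ⟨i, rfl, hi⟩ := mem_support_iff_exists_getVert.mp
      ((mem_verts_toSubgraph p).mp (p.toSubgraph.edge_vert hw))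
    rcases Nat.eq_zero_or_pos i with rfl | hi0
    · exact Or.inl (getVert_zero p)
    rcases hi.lt_or_eq with hil | rfl
    · have := hp.ncard_neighborSet_toSubgraph_internal_eq_two hi0.ne' hil
      rw [Set.mem_ofPred_eq] at hx
      omega
    · exact Or.inr (getVert_length p)
  · rintro (rfl | rfl)
    · simp [hp.neighborSet_toSubgraph_startpoint hnil]
    · simp [hp.neighborSet_toSubgraph_endpoint hnil]

end Walk

end SimpleGraph

open SimpleGraph

variable {n : ℕ}

lemma gDeg_eq_ncard_neighborSet (G : SimpleGraph (Fin n)) (v : Fin n) :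
    gDeg G v = (G.neighborSet v).ncard := rfl

lemma two_mul_ncard_edgeSet (G : SimpleGraph (Fin n)) :
    2 * G.edgeSet.ncard = ∑ v, gDeg G v := by
  rw [Set.ncard_eq_toFinset_card', ← edgeFinset, ← sum_degrees_eq_twice_card_edges]
  refine Finset.sum_congr rfl fun v _ => ?_
  rw [gDeg_eq_ncard_neighborSet, ← card_neighborSet_eq_degree, Set.ncard_eq_toFinset_card',
    Set.toFinset_card]

lemma compCard_eq_ncard_supp (G : SimpleGraph (Fin n)) (v : Fin n) :
    compCard G v = (G.connectedComponentMk v).supp.ncard := by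
  rw [compCard]
  congr 1
  ext u
  rw [ConnectedComponent.mem_supp_iff, ConnectedComponent.eq]
  exact ⟨Reachable.symm, Reachable.symm⟩

lemma mem_support_of_gDeg_pos {G : SimpleGraph (Fin n)} {v : Fin n} (h : 0 < gDeg G v) :
    v ∈ G.support :=
  (Set.nonempty_of_ncard_ne_zero h.ne').choose_spec.mem_support_left

lemma compEdges_eq_ncard_edgeSet {G H : SimpleGraph (Fin n)}
    (hH : ∀ u ∈ H.support, G.neighborSet u = H.neighborSet u)
    {v : Fin n} (hv : v ∈ H.support) (hconn : ∀ u ∈ H.support, H.Reachable v u) :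
    compEdges G v = H.edgeSet.ncard := by
  have hle : H ≤ G := fun u w h => by
    rw [← mem_neighborSet, hH u h.mem_support_left]; exact h
  have hadj : ∀ ⦃x y⦄, x ∈ H.support → G.Adj x y → H.Adj x y := fun x y hx h => by
    rw [← mem_neighborSet, ← hH x hx]; exact h
  have hwalk : ∀ {x y} (p : G.Walk x y), x ∈ H.support → y ∈ H.support := by
    intro x y p
    induction p with
    | nil => exact id
    | cons h _ ih => exact fun hx => ih (hadj hx h).mem_support_right
  have hreach : ∀ u, G.Reachable v u ↔ u ∈ H.support :=
    fun u => ⟨fun ⟨p⟩ => hwalk p hv, fun hu => (hconn u hu).mono hle⟩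
  rw [compEdges]
  congr 1
  ext e
  induction e using Sym2.ind with
  | _ a b =>
  simp only [Set.mem_sep_iff, mem_edgeSet, Sym2.mem_iff, hreach]
  refine ⟨?_, fun h => ⟨hle h, a, Or.inl rfl, h.mem_support_left⟩⟩
  rintro ⟨h, u, rfl | rfl, hu⟩
  exacts [hadj hu h, (hadj hu h.symm).symm]

lemma setOf_gDeg_sup_eq_one {G H : SimpleGraph (Fin n)}
    (hGH : ∀ x ∈ G.support, x ∉ H.support) (hG : ∀ x, gDeg G x ≠ 1) :
    {x | gDeg (G ⊔ H) x = 1} = {x | gDeg H x = 1} := by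
  ext x
  simp only [Set.mem_ofPred_eq, gDeg_eq_ncard_neighborSet]
  by_cases hx : x ∈ G.support
  · rw [neighborSet_sup_of_notMem_support_right (hGH x hx),
      neighborSet_eq_empty_of_notMem_support (hGH x hx), Set.ncard_empty]
    exact iff_of_false (hG x) (by decide)
  · rw [neighborSet_sup_of_notMem_support_left hx]

lemma compEdges_eq_length {F G : SimpleGraph (Fin n)} {u v x : Fin n} {w : F.Walk u v}
    (hw : w.IsTrail) (hx : x ∈ w.toSubgraph.spanningCoe.support)
    (hG : ∀ y ∈ w.toSubgraph.spanningCoe.support,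
      G.neighborSet y = w.toSubgraph.spanningCoe.neighborSet y) :
    compEdges G x = w.length := by
  have hreach : ∀ y ∈ w.toSubgraph.spanningCoe.support,
      w.toSubgraph.spanningCoe.Reachable u y := fun y hy =>
      w.reachable_spanningCoe_toSubgraph (w.mem_support_of_mem_support_spanningCoe_toSubgraph hy)
  rw [compEdges_eq_ncard_edgeSet hG hx fun y hy => (hreach x hx).symm.trans (hreach y hy),
    hw.ncard_edgeSet_spanningCoe_toSubgraph]

section TwoRegular

variable {F : SimpleGraph (Fin n)} {K : ℕ}

lemma gDeg_restrictComponents_of_mem (hreg : ∀ v, gDeg F v = 2) {S : Set F.ConnectedComponent}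
    {v : Fin n} (hv : F.connectedComponentMk v ∈ S) : gDeg (F.restrictComponents S) v = 2 := by
  rw [gDeg_eq_ncard_neighborSet, neighborSet_restrictComponents_of_mem hv, ← hreg v]
  rfl

lemma connectedComponentMk_mem_of_gDeg_restrictComponents_pos {S : Set F.ConnectedComponent}
    {v : Fin n} (hv : 0 < gDeg (F.restrictComponents S) v) : F.connectedComponentMk v ∈ S :=
  connectedComponentMk_mem_of_mem_support_restrictComponents (mem_support_of_gDeg_pos hv)

lemma gDeg_restrictComponents_ne_one (hreg : ∀ v, gDeg F v = 2) {S : Set F.ConnectedComponent}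
    (v : Fin n) : gDeg (F.restrictComponents S) v ≠ 1 := fun hv => by
  have hvS := connectedComponentMk_mem_of_gDeg_restrictComponents_pos (hv ▸ Nat.one_pos)
  rw [gDeg_restrictComponents_of_mem hreg hvS] at hv
  exact absurd hv (by decide)

lemma ncard_setOf_gDeg_restrictComponents_eq_one (hreg : ∀ v, gDeg F v = 2)
    (S : Set F.ConnectedComponent) : {v | gDeg (F.restrictComponents S) v = 1}.ncard = 0 := by
  rw [show {v | gDeg (F.restrictComponents S) v = 1} = ∅ from
    Set.eq_empty_of_forall_notMem (gDeg_restrictComponents_ne_one hreg), Set.ncard_empty]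

lemma ncard_edgeSet_restrictComponents (hreg : ∀ v, gDeg F v = 2)
    (S : Finset F.ConnectedComponent) :
    (F.restrictComponents S).edgeSet.ncard = ∑ c ∈ S, c.supp.ncard := by
  have hsum : ∑ v, gDeg (F.restrictComponents S) v = 2 * ∑ c ∈ S, c.supp.ncard := by
    rw [← Finset.sum_filter_of_ne fun v _ h =>
        connectedComponentMk_mem_of_gDeg_restrictComponents_pos (Nat.pos_of_ne_zero h),
      Finset.sum_congr rfl fun v hv =>
        gDeg_restrictComponents_of_mem hreg (Finset.mem_filter.mp hv).2,
      Finset.sum_const, smul_eq_mul, ← ncard_setOf_connectedComponentMk_mem,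
      ← Set.ncard_coe_finset]
    simp only [Finset.coe_filter, Finset.mem_univ, true_and, Finset.mem_coe, mul_comm]
  have := two_mul_ncard_edgeSet (F.restrictComponents S)
  omega

lemma compEdges_eq_compCard (hreg : ∀ v, gDeg F v = 2) {G : SimpleGraph (Fin n)} {v : Fin n}
    (hG : ∀ u, F.connectedComponentMk u = F.connectedComponentMk v →
      G.neighborSet u = F.neighborSet u) :
    compEdges G v = compCard F v := by
  set H := F.restrictComponents ↑({F.connectedComponentMk v} : Finset F.ConnectedComponent)
  have hsupp : ∀ u, u ∈ H.support ↔ F.connectedComponentMk u = F.connectedComponentMk v := by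
    intro u
    obtain ⟨w, hw⟩ := (mem_support _).mp (mem_support_of_gDeg_pos ((hreg u).symm ▸ two_pos))
    simp only [mem_support, H, restrictComponents_adj, Finset.coe_singleton,
      Set.mem_singleton_iff]
    exact ⟨fun ⟨_, _, h⟩ => h, fun h => ⟨w, hw, h⟩⟩
  rw [compEdges_eq_ncard_edgeSet (H := H), ncard_edgeSet_restrictComponents hreg,
    Finset.sum_singleton, compCard_eq_ncard_supp]
  · intro u hu
    have hu' := (hsupp u).mp hu
    rw [hG u hu', neighborSet_restrictComponents_of_mem (by simpa using hu')]
  · exact (hsupp v).mpr rfl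
  · intro u hu
    have hvu : F.Reachable v u := ConnectedComponent.exact ((hsupp u).mp hu).symm
    exact hvu.some.reachable_restrictComponents (by simp)

lemma le_compEdges_of_neighborSet_eq (hreg : ∀ v, gDeg F v = 2) {G : SimpleGraph (Fin n)}
    {S : Set F.ConnectedComponent}
    (hS : ∀ c ∈ S, K ≤ c.supp.ncard) {v : Fin n} (hv : F.connectedComponentMk v ∈ S)
    (hG : ∀ u, F.connectedComponentMk u ∈ S → G.neighborSet u = F.neighborSet u) :
    K ≤ compEdges G v := by
  rw [compEdges_eq_compCard hreg fun u hu => hG u (hu ▸ hv), compCard_eq_ncard_supp]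
  exact hS _ hv

lemma le_compEdges_restrictComponents (hreg : ∀ v, gDeg F v = 2) {S : Set F.ConnectedComponent}
    (hS : ∀ c ∈ S, K ≤ c.supp.ncard) {v : Fin n} (hv : 0 < gDeg (F.restrictComponents S) v) :
    K ≤ compEdges (F.restrictComponents S) v :=
  le_compEdges_of_neighborSet_eq hreg hS
    (connectedComponentMk_mem_of_gDeg_restrictComponents_pos hv)
    fun _ hu => neighborSet_restrictComponents_of_mem hu

lemma exists_isPath_length_eq (hreg : ∀ v, gDeg F v = 2) (v : Fin n) {p : ℕ}
    (hp : p < compCard F v) :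
    ∃ (u : Fin n) (w : F.Walk v u), w.IsPath ∧ w.length = p := by
  obtain ⟨q, hq, hverts⟩ :=
    IsCycles.exists_cycle_toSubgraph_verts_eq_connectedComponentSupp (fun v _ => hreg v)
      (ConnectedComponent.connectedComponentMk_mem (v := v))
      (mem_support_of_gDeg_pos ((hreg v).symm ▸ two_pos))
  have hlen : q.length = compCard F v := by
    rw [compCard_eq_ncard_supp, ← hverts, hq.ncard_verts_toSubgraph]
  exact ⟨_, q.take p, hq.isPath_take (hlen ▸ hp), by rw [Walk.take_length]; omega⟩

lemma exists_restrictComponents_sup_path (hreg : ∀ v, gDeg F v = 2)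
    {S : Finset F.ConnectedComponent}
    (hS : ∀ c ∈ S, K ≤ c.supp.ncard) {v : Fin n} (hv : F.connectedComponentMk v ∉ S)
    {p : ℕ} (hp0 : 0 < p) (hKp : K ≤ p) (hp : p < compCard F v) :
    ∃ F1 : SimpleGraph (Fin n), F1 ≤ F ∧ F1.edgeSet.ncard = ∑ c ∈ S, c.supp.ncard + p ∧
      {x | gDeg F1 x = 1}.ncard = 2 ∧ ∀ x, 0 < gDeg F1 x → K ≤ compEdges F1 x := by
  obtain ⟨u, w, hw, rfl⟩ := exists_isPath_length_eq hreg v hp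
  set R := F.restrictComponents ↑S
  set P := w.toSubgraph.spanningCoe
  have hSP : ∀ x, F.connectedComponentMk x ∈ S → x ∉ P.support := fun x hxS hxP =>
    hv (w.connectedComponentMk_eq_of_mem_support_spanningCoe_toSubgraph hxP ▸ hxS)
  have hRP : ∀ x ∈ R.support, x ∉ P.support := fun x hx =>
    hSP x (connectedComponentMk_mem_of_mem_support_restrictComponents hx)
  have hnil : ¬w.Nil := Walk.not_nil_iff_lt_length.mpr hp0
  refine ⟨R ⊔ P, sup_le restrictComponents_le (Subgraph.spanningCoe_le _), ?_, ?_, ?_⟩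
  · rw [edgeSet_sup, Set.ncard_union_eq (disjoint_edgeSet.mpr
      (disjoint_of_disjoint_support P (Set.disjoint_left.mpr hRP))),
      ncard_edgeSet_restrictComponents hreg, hw.isTrail.ncard_edgeSet_spanningCoe_toSubgraph]
  · rw [setOf_gDeg_sup_eq_one hRP (gDeg_restrictComponents_ne_one hreg),
      show {x | gDeg P x = 1} = {x | (w.toSubgraph.neighborSet x).ncard = 1} from rfl,
      hw.setOf_ncard_neighborSet_toSubgraph_eq_one hnil,
      Set.ncard_pair (hw.nil_iff_eq.not.mp hnil)]
  · intro x hx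
    by_cases hxP : x ∈ P.support
    · rw [compEdges_eq_length hw.isTrail hxP fun y hy =>
        neighborSet_sup_of_notMem_support_left fun hyR => hRP y hyR hy]
      exact hKp
    · rw [gDeg_eq_ncard_neighborSet, neighborSet_sup_of_notMem_support_right hxP] at hx
      refine le_compEdges_of_neighborSet_eq hreg hS
        (connectedComponentMk_mem_of_gDeg_restrictComponents_pos hx) fun y hy => ?_
      rw [neighborSet_sup_of_notMem_support_right (hSP y hy),
        neighborSet_restrictComponents_of_mem hy]

end TwoRegular

lemma exists_long_components_le_two_mul_sum {K : ℕ} {F : SimpleGraph (Fin n)}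
    (hlong : (n : ℝ) / 2 ≤ ({v : Fin n | K ≤ compCard F v}.ncard : ℝ)) :
    ∃ L : Finset F.ConnectedComponent, (∀ c ∈ L, K ≤ c.supp.ncard) ∧
      n ≤ 2 * ∑ c ∈ L, c.supp.ncard := by
  refine ⟨Finset.univ.filter fun c => K ≤ c.supp.ncard, fun c hc => (Finset.mem_filter.mp hc).2,
    ?_⟩
  have hset : {v : Fin n | K ≤ compCard F v} = {v | F.connectedComponentMk v ∈
      Finset.univ.filter (fun c : F.ConnectedComponent => K ≤ c.supp.ncard)} := by
    ext v
    simp [compCard_eq_ncard_supp]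
  rw [← ncard_setOf_connectedComponentMk_mem, ← hset]
  have : (n : ℝ) ≤ 2 * ({v : Fin n | K ≤ compCard F v}.ncard : ℝ) := by linarith
  exact_mod_cast this

lemma Finset.exists_subset_le_sum_and_sum_erase_lt {ι : Type*} [DecidableEq ι] (L : Finset ι)
    (f : ι → ℕ) {m : ℕ} (h : m ≤ ∑ i ∈ L, f i) :
    ∃ S ⊆ L, m ≤ ∑ i ∈ S, f i ∧ ∀ i ∈ S, ∑ j ∈ S.erase i, f j < m := by
  obtain ⟨S, hS, hmin⟩ := Finset.exists_min_image
    (L.powerset.filter fun S => m ≤ ∑ i ∈ S, f i) Finset.card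
    ⟨L, Finset.mem_filter.mpr ⟨Finset.mem_powerset_self L, h⟩⟩
  rw [Finset.mem_filter, Finset.mem_powerset] at hS
  refine ⟨S, hS.1, hS.2, fun i hi => ?_⟩
  by_contra! hle
  have := hmin (S.erase i) (Finset.mem_filter.mpr
    ⟨Finset.mem_powerset.mpr ((S.erase_subset i).trans hS.1), hle⟩)
  rw [Finset.card_erase_of_mem hi] at this
  have := Finset.card_pos.mpr ⟨i, hi⟩
  omega

lemma half_le_and_le_half_add_of_two_mul {n E K : ℕ} (h1 : n ≤ 2 * E)
    (h2 : 2 * E ≤ n + 4 * K) :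
    (n : ℝ) / 2 ≤ E ∧ (E : ℝ) ≤ n / 2 + 2 * K := by
  have h1' : (n : ℝ) ≤ 2 * E := by exact_mod_cast h1
  have h2' : (2 * E : ℝ) ≤ n + 4 * K := by exact_mod_cast h2
  constructor <;> linarith

/-- Any two-factor `F` with at least `n/2` vertices on cycles of length at least `K`
contains a subgraph `F¹` with `n/2 ≤ e(F¹) ≤ n/2 + 2K` whose components are cycles of
length at least `K` and at most one path of length at least `K`.  (Here `F¹ ≤ F` with
`∀ v, deg v ≤ 2` forces all components to be paths or cycles; the number of vertices of
degree one being `0` or `2` says there is at most one nontrivial path component; and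
every nontrivial component having at least `K` edges says each cycle, resp. the path,
has length at least `K`.) -/
theorem choose_long_subfactor (K n : ℕ) (hK : 3 ≤ K) (F : SimpleGraph (Fin n))
    (hreg : ∀ v, gDeg F v = 2)
    (hlong : (n : ℝ) / 2 ≤ ({v : Fin n | K ≤ compCard F v}.ncard : ℝ)) :
    ∃ F1 : SimpleGraph (Fin n), F1 ≤ F ∧
      (n : ℝ) / 2 ≤ (F1.edgeSet.ncard : ℝ) ∧
      (F1.edgeSet.ncard : ℝ) ≤ (n : ℝ) / 2 + 2 * K ∧
      ({v : Fin n | gDeg F1 v = 1}.ncard = 0 ∨ {v : Fin n | gDeg F1 v = 1}.ncard = 2) ∧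
      (∀ v : Fin n, 0 < gDeg F1 v → K ≤ compEdges F1 v) := by
  obtain ⟨L, hLlong, hLsum⟩ := exists_long_components_le_two_mul_sum hlong
  obtain ⟨S, hSL, hSsum, hSmin⟩ :=
    L.exists_subset_le_sum_and_sum_erase_lt (fun c => c.supp.ncard) (m := (n + 1) / 2) (by omega)
  have hS : ∀ c ∈ S, K ≤ c.supp.ncard := fun c hc => hLlong c (hSL hc)
  by_cases hsmall : 2 * ∑ c ∈ S, c.supp.ncard ≤ n + 4 * K
  · obtain ⟨hlow, hhigh⟩ := half_le_and_le_half_add_of_two_mul (n := n) (K := K)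
      (E := (F.restrictComponents S).edgeSet.ncard)
      (by rw [ncard_edgeSet_restrictComponents hreg]; omega)
      (by rw [ncard_edgeSet_restrictComponents hreg]; omega)
    exact ⟨_, restrictComponents_le, hlow, hhigh,
      Or.inl (ncard_setOf_gDeg_restrictComponents_eq_one hreg _),
      fun v => le_compEdges_restrictComponents hreg hS⟩
  · obtain ⟨c, hc⟩ : S.Nonempty :=
      Finset.nonempty_of_sum_ne_zero (f := fun c => c.supp.ncard) (by omega)
    obtain ⟨v, rfl⟩ : ∃ v, F.connectedComponentMk v = c := c.ind fun v => ⟨v, rfl⟩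
    have hsplit := Finset.add_sum_erase S (fun c => c.supp.ncard) hc
    have hrest := hSmin _ hc
    obtain ⟨F1, hle, hE, hdeg, hcomp⟩ := exists_restrictComponents_sup_path hreg
      (fun c hc => hS c (Finset.mem_of_mem_erase hc)) (Finset.notMem_erase _ S)
      (p := max K ((n + 1) / 2 - ∑ c ∈ S.erase (F.connectedComponentMk v), c.supp.ncard))
      (by omega) (le_max_left _ _) (by rw [compCard_eq_ncard_supp F v]; omega)
    obtain ⟨hlow, hhigh⟩ := half_le_and_le_half_add_of_two_mul (n := n) (K := K)
      (E := F1.edgeSet.ncard) (by omega) (by omega)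
    exact ⟨F1, hle, hlow, hhigh, Or.inr hdeg, hcomp⟩
end
end
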